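/- arXiv:2303.09904 — 7 statements merged into one kernel-verified Lean document; each statement's English description precedes it below -/
import Mathlib

section
/- For every natural number d and every complex number w, the elementary factors satisfy E_d(w)·E_d(−w) = E_{⌊d/2⌋}(w²). -/
/-! The linear factors multiply to `1 - w ^ 2`; in the exponent the odd-degree terms of the two
truncated logarithm series cancel and the even ones double, `2 · w ^ (2j) / (2j) = (w ^ 2) ^ j / j`,
leaving the series of `w ^ 2` truncated at degree `d / 2`. -/

/-- The Weierstrass elementary factor: `E 0 w = 1 - w` and
`E p w = (1 - w) * exp (∑_{k=1}^p w^k / k)` for `p ≥ 1`. -/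
noncomputable def elemFactor (p : ℕ) (w : ℂ) : ℂ :=
  (1 - w) * Complex.exp (∑ k ∈ Finset.Icc 1 p, w ^ k / (k : ℂ))

open Finset

theorem Finset.sum_Icc_eq_sum_Icc_div_two_of_odd {M : Type*} [AddCommMonoid M] (f : ℕ → M)
    (hf : ∀ k, Odd k → f k = 0) (d : ℕ) :
    ∑ k ∈ Icc 1 d, f k = ∑ j ∈ Icc 1 (d / 2), f (2 * j) := by
  rw [← sum_image (g := (2 * ·)) fun _ _ _ _ h => by simpa using h]
  refine (sum_subset (fun k hk => ?_) fun k hk hk' => hf k ?_).symm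
  · simp only [mem_image, mem_Icc] at hk ⊢
    omega
  · simp only [mem_image, mem_Icc, not_exists, not_and] at hk hk'
    refine Nat.odd_iff.mpr (by_contra fun hev => hk' (k / 2) ?_ ?_) <;> omega

theorem pow_div_add_neg_pow_div_of_odd {K : Type*} [DivisionRing K] (w : K) {k : ℕ} (hk : Odd k) :
    w ^ k / k + (-w) ^ k / k = 0 := by
  rw [hk.neg_pow, neg_div, add_neg_cancel]

theorem pow_div_add_neg_pow_div_two_mul {K : Type*} [Field K] [CharZero K] (w : K) {j : ℕ}
    (hj : j ≠ 0) : w ^ (2 * j) / (2 * j : ℕ) + (-w) ^ (2 * j) / (2 * j : ℕ) = (w ^ 2) ^ j / j := by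
  rw [(even_two_mul j).neg_pow, ← pow_mul]
  field_simp
  push_cast
  ring

/-- For every natural number `d` and every complex number `w`,
`E d w * E d (-w) = E (⌊d/2⌋) (w^2)`. -/
theorem elemFactor_mul_neg (d : ℕ) (w : ℂ) :
    elemFactor d w * elemFactor d (-w) = elemFactor (d / 2) (w ^ 2) := by
  have hsum : ∑ k ∈ Icc 1 d, w ^ k / (k : ℂ) + ∑ k ∈ Icc 1 d, (-w) ^ k / (k : ℂ) =
      ∑ j ∈ Icc 1 (d / 2), (w ^ 2) ^ j / (j : ℂ) := by
    rw [← sum_add_distrib, sum_Icc_eq_sum_Icc_div_two_of_odd _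
      (fun k hk => pow_div_add_neg_pow_div_of_odd w hk)]
    exact sum_congr rfl fun j hj =>
      pow_div_add_neg_pow_div_two_mul w (by simp only [mem_Icc] at hj; omega)
  rw [elemFactor, elemFactor, elemFactor, mul_mul_mul_comm, ← Complex.exp_add, hsum]
  ring
end

section
/- Let p be a natural number and a a nonzero complex number. For every complex number z with z ≠ a, the logarithmic derivative of the function z ↦ E_p(z/a) at z equals z^p/(a^p·(z − a)); consequently, for a positive integer k, the logarithmic derivative of z ↦ E_p(z/a)^k at z equals k·z^p/(a^p·(z − a)). -/
/-!
The partial logarithmic series `∑_{k=1}^p w^k/k` has derivative `∑_{j<p} w^j`, and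
`(1 - w) ∑_{j<p} w^j = 1 - w^p` telescopes, so `E_p'(w) = -w^p exp(∑_{k=1}^p w^k/k)`.
Dividing by `E_p(w)` gives `E_p'/E_p = w^p/(w - 1)`; the chain rule for `w = z/a` and
`logDeriv (f^k) = k logDeriv f` do the rest.
-/

open Finset

theorem hasDerivAt_sum_Icc_pow_div {𝕜 : Type*} [NontriviallyNormedField 𝕜] [CharZero 𝕜]
    (p : ℕ) (w : 𝕜) :
    HasDerivAt (fun w => ∑ k ∈ Icc 1 p, w ^ k / (k : 𝕜)) (∑ j ∈ range p, w ^ j) w := by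
  induction p with
  | zero => simpa using hasDerivAt_const w (0 : 𝕜)
  | succ p ih =>
    simp only [sum_Icc_succ_top (Nat.le_add_left 1 p), sum_range_succ]
    refine (ih.fun_add ((hasDerivAt_pow (p + 1) w).div_const ((p + 1 : ℕ) : 𝕜))).congr_deriv ?_
    rw [Nat.add_sub_cancel, mul_div_cancel_left₀ _ (Nat.cast_ne_zero.mpr p.succ_ne_zero)]

theorem hasDerivAt_elemFactor (p : ℕ) (w : ℂ) :
    HasDerivAt (elemFactor p)
      (-w ^ p * Complex.exp (∑ k ∈ Icc 1 p, w ^ k / (k : ℂ))) w := by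
  refine (((hasDerivAt_id' w).const_sub 1).fun_mul
    (hasDerivAt_sum_Icc_pow_div p w).cexp).congr_deriv ?_
  linear_combination Complex.exp (∑ k ∈ Icc 1 p, w ^ k / (k : ℂ)) * mul_neg_geom_sum w p

theorem differentiable_elemFactor (p : ℕ) : Differentiable ℂ (elemFactor p) :=
  fun w => (hasDerivAt_elemFactor p w).differentiableAt

theorem logDeriv_elemFactor_of_ne_one (p : ℕ) {w : ℂ} (hw : w ≠ 1) :
    logDeriv (elemFactor p) w = w ^ p / (w - 1) := by
  have h₁ : (1 : ℂ) - w ≠ 0 := sub_ne_zero.mpr hw.symm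
  have h₂ : w - 1 ≠ 0 := sub_ne_zero.mpr hw
  rw [logDeriv_apply, (hasDerivAt_elemFactor p w).deriv, elemFactor]
  field_simp
  ring

theorem logDeriv_comp_div_const {𝕜 : Type*} [NontriviallyNormedField 𝕜] {f : 𝕜 → 𝕜}
    {a z : 𝕜} (hf : DifferentiableAt 𝕜 f (z / a)) :
    logDeriv (fun z => f (z / a)) z = logDeriv f (z / a) / a := by
  have hdiv : HasDerivAt (fun z => z / a) a⁻¹ z := by
    simpa using (hasDerivAt_id z).div_const a
  rw [← Function.comp_def, logDeriv_comp (g := fun z => z / a) hf hdiv.differentiableAt,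
    hdiv.deriv, ← div_eq_mul_inv]

/-- For `a ≠ 0` and `z ≠ a`, the logarithmic derivative of `z ↦ E p (z/a)` at `z` is
`z^p / (a^p * (z - a))`; consequently, for a positive integer `k`, the logarithmic
derivative of `z ↦ E p (z/a)^k` at `z` is `k * z^p / (a^p * (z - a))`. -/
theorem logDeriv_elemFactor (p : ℕ) (a : ℂ) (ha : a ≠ 0) (z : ℂ) (hz : z ≠ a) :
    logDeriv (fun z : ℂ => elemFactor p (z / a)) z = z ^ p / (a ^ p * (z - a)) ∧
    ∀ k : ℕ, 0 < k →
      logDeriv (fun z : ℂ => elemFactor p (z / a) ^ k) z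
        = (k : ℂ) * z ^ p / (a ^ p * (z - a)) := by
  have hza : z / a ≠ 1 := by rwa [Ne, div_eq_one_iff_eq ha]
  have hmain : logDeriv (fun z : ℂ => elemFactor p (z / a)) z = z ^ p / (a ^ p * (z - a)) := by
    rw [logDeriv_comp_div_const (differentiable_elemFactor p _),
      logDeriv_elemFactor_of_ne_one p hza, div_pow]
    have : z - a ≠ 0 := sub_ne_zero.mpr hz
    field_simp
  have hdiff : DifferentiableAt ℂ (fun z : ℂ => elemFactor p (z / a)) z :=
    (differentiable_elemFactor p _).comp z (differentiableAt_id.div_const a)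
  refine ⟨hmain, fun k _ => ?_⟩
  rw [logDeriv_fun_pow hdiff, hmain, mul_div_assoc]
end

section
/- The function A is analytic (complex differentiable) on ℂ \ {z_n² : n ∈ ℕ}. -/
/-- For pairwise distinct positive reals `z n → ∞` and multiplicities `k n ≥ 1` with
`∑ n, k n / z n ^ (2*(d'+1)) < ∞`, the function
`A s = ∑' n, k n * s ^ d' / (z n ^ (2 d') * (z n ^ 2 - s))`
is complex differentiable on `ℂ \ {z n ^ 2 : n ∈ ℕ}`. -/
theorem A_differentiableOn (d' : ℕ) (z : ℕ → ℝ) (hzinj : Function.Injective z)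
    (hzpos : ∀ n, 0 < z n) (hztop : Filter.Tendsto z Filter.atTop Filter.atTop)
    (k : ℕ → ℕ) (hk : ∀ n, 0 < k n)
    (hsum : Summable fun n => (k n : ℝ) / z n ^ (2 * (d' + 1))) :
    DifferentiableOn ℂ
      (fun s : ℂ => ∑' n, (k n : ℂ) * s ^ d' / ((z n : ℂ) ^ (2 * d') * ((z n : ℂ) ^ 2 - s)))
      {s : ℂ | ∀ n, s ≠ (z n : ℂ) ^ 2} := by
  intro s₀ hs₀
  simp only [Set.mem_setOf_eq] at hs₀
  -- z n ^ 2 → ∞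
  have hz2top : Filter.Tendsto (fun n => z n ^ 2) Filter.atTop Filter.atTop := by
    have := hztop.atTop_mul_atTop₀ hztop
    simpa [pow_two] using this
  -- the distances from the poles to s₀ tend to ∞
  have hdist : Filter.Tendsto (fun n => ‖(z n : ℂ) ^ 2 - s₀‖) Filter.cofinite Filter.atTop := by
    rw [Nat.cofinite_eq_atTop]
    refine Filter.tendsto_atTop_mono (fun n => ?_)
      (Filter.tendsto_atTop_add_const_right _ (-‖s₀‖) hz2top)
    have h1 : ‖((z n : ℂ) ^ 2)‖ - ‖s₀‖ ≤ ‖(z n : ℂ) ^ 2 - s₀‖ := norm_sub_norm_le _ _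
    have h2 : ‖((z n : ℂ) ^ 2)‖ = z n ^ 2 := by
      rw [show ((z n : ℂ) ^ 2) = ((z n ^ 2 : ℝ) : ℂ) by push_cast; ring,
        Complex.norm_real, Real.norm_of_nonneg (sq_nonneg _)]
    linarith
  -- a uniform positive lower bound on distances to s₀
  obtain ⟨n₀, hn₀⟩ := hdist.exists_forall_le
  set ε : ℝ := ‖(z n₀ : ℂ) ^ 2 - s₀‖ with hε
  have hεpos : 0 < ε := by
    rw [hε, norm_pos_iff, sub_ne_zero]
    exact fun h => hs₀ n₀ h.symm
  set r : ℝ := min (ε / 2) 1 with hr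
  have hrpos : 0 < r := lt_min (by linarith) one_pos
  set C : ℝ := ‖s₀‖ + 1 with hC
  have hCpos : 0 < C := by positivity
  set U : Set ℂ := Metric.ball s₀ r with hU
  -- on U, distances to poles are bounded below
  have key : ∀ s ∈ U, ∀ n, max (ε / 2) (z n ^ 2 - C) ≤ ‖(z n : ℂ) ^ 2 - s‖ := by
    intro s hs n
    have hd : ‖s - s₀‖ < r := by simpa [hU, dist_eq_norm] using hs
    have h1 : ‖(z n : ℂ) ^ 2 - s₀‖ - ‖s - s₀‖ ≤ ‖(z n : ℂ) ^ 2 - s‖ := by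
      have := norm_sub_norm_le ((z n : ℂ) ^ 2 - s₀) (s - s₀)
      have e : (z n : ℂ) ^ 2 - s₀ - (s - s₀) = (z n : ℂ) ^ 2 - s := by ring
      rwa [e] at this
    have h2 : ‖((z n : ℂ) ^ 2)‖ = z n ^ 2 := by
      rw [show ((z n : ℂ) ^ 2) = ((z n ^ 2 : ℝ) : ℂ) by push_cast; ring,
        Complex.norm_real, Real.norm_of_nonneg (sq_nonneg _)]
    have h3 : z n ^ 2 - C ≤ ‖(z n : ℂ) ^ 2 - s‖ := by
      have h4 : ‖((z n : ℂ) ^ 2)‖ - ‖s‖ ≤ ‖(z n : ℂ) ^ 2 - s‖ := norm_sub_norm_le _ _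
      have h5 : ‖s‖ ≤ ‖s₀‖ + r := by
        calc ‖s‖ = ‖s₀ + (s - s₀)‖ := by ring_nf
        _ ≤ ‖s₀‖ + ‖s - s₀‖ := norm_add_le _ _
        _ ≤ ‖s₀‖ + r := by linarith
      have hr1 : r ≤ 1 := min_le_right _ _
      rw [h2] at h4; rw [hC]; linarith
    have h6 : ε / 2 ≤ ‖(z n : ℂ) ^ 2 - s‖ := by
      have := hn₀ n
      have hrε : r ≤ ε / 2 := min_le_left _ _
      linarith
    exact max_le h6 h3
  -- norms of z n powers
  have hznorm : ∀ n (m : ℕ), ‖((z n : ℂ)) ^ m‖ = z n ^ m := fun n m => by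
    rw [norm_pow, Complex.norm_real, Real.norm_of_nonneg (hzpos n).le]
  -- the dominating sequence
  set u : ℕ → ℝ := fun n => (k n : ℝ) * C ^ d' / (z n ^ (2 * d') * max (ε / 2) (z n ^ 2 - C))
    with hu
  have hupos : ∀ n, 0 ≤ u n := fun n => by
    have : (0:ℝ) < max (ε / 2) (z n ^ 2 - C) := lt_max_of_lt_left (by linarith)
    have := hzpos n
    positivity
  have husum : Summable u := by
    refine summable_of_isBigO_nat hsum (Asymptotics.IsBigO.of_bound (2 * C ^ d') ?_)
    rw [← Nat.cofinite_eq_atTop]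
    filter_upwards [hz2top.eventually_ge_atTop (2 * C) |>.filter_mono
      Nat.cofinite_eq_atTop.le] with n hn
    have hzp := hzpos n
    have hmax : z n ^ 2 / 2 ≤ max (ε / 2) (z n ^ 2 - C) :=
      le_max_of_le_right (by linarith)
    have hmaxpos : (0:ℝ) < max (ε / 2) (z n ^ 2 - C) := lt_max_of_lt_left (by linarith)
    have hkpos : (0:ℝ) < (k n : ℝ) := Nat.cast_pos.mpr (hk n)
    rw [Real.norm_of_nonneg (hupos n), Real.norm_of_nonneg (by positivity)]
    have h1 : u n ≤ (k n : ℝ) * C ^ d' / (z n ^ (2 * d') * (z n ^ 2 / 2)) := by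
      simp only [hu]
      gcongr
    calc u n ≤ (k n : ℝ) * C ^ d' / (z n ^ (2 * d') * (z n ^ 2 / 2)) := h1
      _ = 2 * C ^ d' * ((k n : ℝ) / z n ^ (2 * (d' + 1))) := by
          rw [mul_add, pow_add]; field_simp
  -- each term is differentiable on U, with the required bound
  have hdiff : DifferentiableOn ℂ
      (fun s : ℂ => ∑' n, (k n : ℂ) * s ^ d' / ((z n : ℂ) ^ (2 * d') * ((z n : ℂ) ^ 2 - s))) U := by
    refine Complex.differentiableOn_tsum_of_summable_norm husum (fun n => ?_) Metric.isOpen_ball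
      (fun n w hw => ?_)
    · refine DifferentiableOn.div (by fun_prop) (by fun_prop) ?_
      intro s hs
      have := key s hs n
      have hmaxpos : (0:ℝ) < max (ε / 2) (z n ^ 2 - C) := lt_max_of_lt_left (by linarith)
      have h2 : (z n : ℂ) ^ 2 - s ≠ 0 := by
        intro h; rw [h, norm_zero] at this; linarith
      have h3 : (z n : ℂ) ^ (2 * d') ≠ 0 :=
        pow_ne_zero _ (by exact_mod_cast (hzpos n).ne')
      exact mul_ne_zero h3 h2
    · have hkey := key w hw n
      have hmaxpos : (0:ℝ) < max (ε / 2) (z n ^ 2 - C) := lt_max_of_lt_left (by linarith)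
      have hwle : ‖w‖ ≤ C := by
        have hd : ‖w - s₀‖ < r := by simpa [hU, dist_eq_norm] using hw
        have hr1 : r ≤ 1 := min_le_right _ _
        calc ‖w‖ = ‖s₀ + (w - s₀)‖ := by ring_nf
          _ ≤ ‖s₀‖ + ‖w - s₀‖ := norm_add_le _ _
          _ ≤ C := by rw [hC]; linarith
      rw [norm_div, norm_mul, norm_mul, hznorm, norm_pow]
      have hzp := hzpos n
      have hknorm : ‖((k n : ℂ))‖ = (k n : ℝ) := by
        rw [show ((k n : ℂ)) = (((k n : ℝ)) : ℂ) by push_cast; rfl,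
          Complex.norm_real, Real.norm_of_nonneg (by positivity)]
      rw [hknorm]
      simp only [hu]
      gcongr <;> first | exact norm_nonneg _ | exact hwle | exact hkey
  exact (hdiff.differentiableAt (Metric.ball_mem_nhds s₀ hrpos)).differentiableWithinAt
end

section
/- For every index m, the function A has a simple pole at s = z_m² with negative residue: the limit of (s − z_m²)·A(s) as s → z_m² (through s ∉ {z_n² : n ∈ ℕ}) exists and equals −k_m. -/
open Filter Metric

set_option maxHeartbeats 1000000 in
/-- For pairwise distinct positive reals `z n → ∞` and multiplicities `k n ≥ 1` with
`∑ n, k n / z n ^ (2*(d'+1)) < ∞`, the function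
`A s = ∑' n, k n * s ^ d' / (z n ^ (2 d') * (z n ^ 2 - s))`
has a simple pole at `s = z m ^ 2` with negative residue: `(s - z m ^ 2) * A s → -(k m)`
as `s → z m ^ 2` through `s ∉ {z n ^ 2 : n}`. -/
theorem A_simple_pole_neg_residue (d' : ℕ) (z : ℕ → ℝ) (hzinj : Function.Injective z)
    (hzpos : ∀ n, 0 < z n) (hztop : Filter.Tendsto z Filter.atTop Filter.atTop)
    (k : ℕ → ℕ) (hk : ∀ n, 0 < k n)
    (hsum : Summable fun n => (k n : ℝ) / z n ^ (2 * (d' + 1))) (m : ℕ) :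
    Filter.Tendsto
      (fun s : ℂ => (s - (z m : ℂ) ^ 2) *
        ∑' n, (k n : ℂ) * s ^ d' / ((z n : ℂ) ^ (2 * d') * ((z n : ℂ) ^ 2 - s)))
      (nhdsWithin ((z m : ℂ) ^ 2) {s : ℂ | ∀ n, s ≠ (z n : ℂ) ^ 2})
      (nhds (-(k m : ℂ))) := by
  classical
  set c : ℝ := z m ^ 2 with hc
  have hcpos : 0 < c := pow_pos (hzpos m) 2
  have hcc : ((z m : ℂ)) ^ 2 = ((c : ℝ) : ℂ) := by rw [hc]; push_cast; ring
  have hsq : ∀ n, n ≠ m → z n ^ 2 ≠ c := by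
    intro n hnm h
    apply hnm; apply hzinj
    have h2 : (z n - z m) * (z n + z m) = 0 := by rw [hc] at h; linear_combination h
    rcases mul_eq_zero.1 h2 with h3 | h3
    · linarith
    · nlinarith [hzpos n, hzpos m]
  -- a uniform gap δ
  set g : ℕ → ℝ := fun n => if n = m then 1 else |z n ^ 2 - c| with hg
  have hgpos : ∀ n, 0 < g n := by
    intro n; by_cases h : n = m
    · simp [hg, h]
    · simp only [hg, if_neg h]
      exact abs_pos.2 (sub_ne_zero.2 (hsq n h))
  have hgtop : Filter.Tendsto g Filter.atTop Filter.atTop := by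
    apply tendsto_atTop_mono' atTop ?_ (tendsto_atTop_add_const_right _ (-(c+1)) hztop)
    filter_upwards [hztop.eventually_ge_atTop 1] with n hn1
    by_cases h : n = m
    · subst h; simp only [hg, if_pos rfl]; nlinarith
    · simp only [hg, if_neg h]
      have h1 : z n ^ 2 - c ≤ |z n ^ 2 - c| := le_abs_self _
      nlinarith
  obtain ⟨n₀, hn₀⟩ := (hgtop.mono_left Nat.cofinite_eq_atTop.le).exists_forall_le
  set δ : ℝ := min (g n₀) 1 with hδ
  have hδpos : 0 < δ := lt_min (hgpos n₀) one_pos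
  have hδ1 : δ ≤ 1 := min_le_right _ _
  have hδle : ∀ n, n ≠ m → δ ≤ |z n ^ 2 - c| := by
    intro n hn
    refine (min_le_left _ _).trans ((hn₀ n).trans_eq ?_)
    simp [hg, hn]
  -- constants
  set C : ℝ := (c + 1) ^ d' with hC
  have hCpos : 0 < C := pow_pos (by linarith) _
  set K : ℝ := 2 * C * (2 * c + 2) / δ + 2 * C with hK
  have hK2C : 2 * C ≤ K := le_add_of_nonneg_left (by positivity)
  have hKpos : (0 : ℝ) < K := lt_of_lt_of_le (by linarith) hK2C
  have hKδ : 2 * C * (2 * c + 2) ≤ K * δ := by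
    have h1 : K * δ = 2 * C * (2 * c + 2) + 2 * C * δ := by
      rw [hK]; field_simp
    nlinarith
  set u : ℕ → ℝ := fun n => K * ((k n : ℝ) / z n ^ (2 * (d' + 1))) with hu'
  have hu : Summable u := hsum.mul_left K
  set T : ℕ → ℂ → ℂ := fun n s =>
    (k n : ℂ) * s ^ d' / ((z n : ℂ) ^ (2 * d') * ((z n : ℂ) ^ 2 - s)) with hT
  set B : Set ℂ := Metric.ball ((c : ℝ) : ℂ) (δ / 2) with hB
  -- norm computations on the ball
  have hnormT : ∀ n (s' : ℂ),
      ‖T n s'‖ = (k n : ℝ) * ‖s'‖ ^ d' / (z n ^ (2 * d') * ‖(z n : ℂ) ^ 2 - s'‖) := by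
    intro n s'
    simp [hT, norm_div, norm_mul, norm_pow, Complex.norm_real, Real.norm_eq_abs,
      abs_of_pos (hzpos n)]
  have hsnorm : ∀ s ∈ B, ‖s‖ ≤ c + 1 := by
    intro s hs
    have hsd : ‖s - ((c : ℝ) : ℂ)‖ < δ / 2 := by rwa [hB, mem_ball, dist_eq_norm] at hs
    calc ‖s‖ = ‖((c : ℝ) : ℂ) + (s - ((c : ℝ) : ℂ))‖ := by ring_nf
      _ ≤ ‖((c : ℝ) : ℂ)‖ + ‖s - ((c : ℝ) : ℂ)‖ := norm_add_le _ _
      _ ≤ c + 1 := by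
          rw [Complex.norm_real, Real.norm_eq_abs, abs_of_pos hcpos]
          linarith
  have hdiff : ∀ n, ∀ s ∈ B, |z n ^ 2 - c| - δ / 2 ≤ ‖(z n : ℂ) ^ 2 - s‖ := by
    intro n s hs
    have hsd : ‖s - ((c : ℝ) : ℂ)‖ < δ / 2 := by rwa [hB, mem_ball, dist_eq_norm] at hs
    have h1 : ‖(z n : ℂ) ^ 2 - ((c : ℝ) : ℂ)‖ = |z n ^ 2 - c| := by
      rw [show (z n : ℂ) ^ 2 - ((c : ℝ) : ℂ) = (((z n ^ 2 - c : ℝ)) : ℂ) by push_cast; ring,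
        Complex.norm_real, Real.norm_eq_abs]
    calc |z n ^ 2 - c| - δ / 2
        ≤ ‖(z n : ℂ) ^ 2 - ((c : ℝ) : ℂ)‖ - ‖s - ((c : ℝ) : ℂ)‖ := by rw [h1]; linarith
      _ ≤ ‖((z n : ℂ) ^ 2 - ((c : ℝ) : ℂ)) - (s - ((c : ℝ) : ℂ))‖ := norm_sub_norm_le _ _
      _ = ‖(z n : ℂ) ^ 2 - s‖ := by ring_nf
  have hlb : ∀ n, n ≠ m → ∀ s ∈ B, δ / 2 ≤ ‖(z n : ℂ) ^ 2 - s‖ := by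
    intro n hn s hs
    have := hdiff n s hs
    have := hδle n hn
    linarith
  -- the key uniform bound
  have key : ∀ n, n ≠ m → ∀ s ∈ B, ‖T n s‖ ≤ u n := by
    intro n hnm s hs
    have hzn := hzpos n
    have hq : (0 : ℝ) < z n ^ (2 * d') := pow_pos hzn _
    have hz2 : (0 : ℝ) < z n ^ 2 := pow_pos hzn _
    have hbpos : (0 : ℝ) < ‖(z n : ℂ) ^ 2 - s‖ := lt_of_lt_of_le (by linarith) (hlb n hnm s hs)
    have hsC : ‖s‖ ^ d' ≤ C := by
      rw [hC]; exact pow_le_pow_left₀ (norm_nonneg s) (hsnorm s hs) d'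
    have hkn : (0 : ℝ) ≤ (k n : ℝ) := Nat.cast_nonneg _
    have hpow : z n ^ (2 * (d' + 1)) = z n ^ (2 * d') * z n ^ 2 := by
      rw [← pow_add]; ring_nf
    rw [hnormT]
    show (k n : ℝ) * ‖s‖ ^ d' / (z n ^ (2 * d') * ‖(z n : ℂ) ^ 2 - s‖)
        ≤ K * ((k n : ℝ) / z n ^ (2 * (d' + 1)))
    rw [hpow, mul_div_assoc', div_le_div_iff₀ (by positivity) (by positivity)]
    set q : ℝ := z n ^ (2 * d')
    set b : ℝ := ‖(z n : ℂ) ^ 2 - s‖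
    have eA : (k n : ℝ) * ‖s‖ ^ d' ≤ (k n : ℝ) * C := mul_le_mul_of_nonneg_left hsC hkn
    by_cases h2 : 2 * c + 2 ≤ z n ^ 2
    · -- large z n : b ≥ z n ^ 2 / 2
      have hab : |z n ^ 2 - c| = z n ^ 2 - c := abs_of_pos (by linarith)
      have hb2 : z n ^ 2 / 2 ≤ b := by
        have := hdiff n s hs; rw [hab] at this; linarith
      have eB : q * z n ^ 2 ≤ q * (2 * b) := mul_le_mul_of_nonneg_left (by linarith) hq.le
      have e1 := mul_le_mul eA eB (by positivity) (by positivity)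
      have e3 := mul_le_mul_of_nonneg_right hK2C
        (by positivity : (0 : ℝ) ≤ (k n : ℝ) * (q * b))
      nlinarith [e1, e3]
    · -- small z n : b ≥ δ / 2
      push_neg at h2
      have hb2 : δ / 2 ≤ b := hlb n hnm s hs
      have eB : q * z n ^ 2 ≤ q * (2 * c + 2) := mul_le_mul_of_nonneg_left h2.le hq.le
      have e1 := mul_le_mul eA eB (by positivity) (by positivity)
      have e2 : K * (k n : ℝ) * (q * (δ / 2)) ≤ K * (k n : ℝ) * (q * b) :=
        mul_le_mul_of_nonneg_left (mul_le_mul_of_nonneg_left hb2 hq.le) (by positivity)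
      have e3 := mul_le_mul_of_nonneg_left hKδ
        (by positivity : (0 : ℝ) ≤ (k n : ℝ) * q / 2)
      calc (↑(k n) : ℝ) * ‖s‖ ^ d' * (q * z n ^ 2)
          ≤ ↑(k n) * C * (q * (2 * c + 2)) := e1
        _ = ↑(k n) * q / 2 * (2 * C * (2 * c + 2)) := by ring
        _ ≤ ↑(k n) * q / 2 * (K * δ) := e3
        _ = K * ↑(k n) * (q * (δ / 2)) := by ring
        _ ≤ K * ↑(k n) * (q * b) := e2
  -- the tail function
  set f : ℂ → ℂ := fun s => ∑' n, if n = m then 0 else T n s with hf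
  have hbound : ∀ n, ∀ s ∈ B, ‖if n = m then (0 : ℂ) else T n s‖ ≤ u n := by
    intro n s hs
    by_cases h : n = m
    · rw [if_pos h, norm_zero]
      exact mul_nonneg hKpos.le (div_nonneg (Nat.cast_nonneg _) (pow_nonneg (hzpos n).le _))
    · rw [if_neg h]; exact key n h s hs
  have hfcont : ContinuousOn f B := by
    apply continuousOn_tsum ?_ hu (fun n x hx => hbound n x hx)
    intro n
    by_cases h : n = m
    · simp only [h, if_pos rfl]; exact continuousOn_const
    · simp only [if_neg h]
      apply ContinuousOn.div
      · exact (continuous_const.mul (continuous_pow d')).continuousOn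
      · exact (continuous_const.mul (continuous_const.sub continuous_id)).continuousOn
      · intro x hx
        apply mul_ne_zero
        · exact pow_ne_zero _ (by exact_mod_cast (hzpos n).ne')
        · have h1 : (0 : ℝ) < ‖(z n : ℂ) ^ 2 - x‖ :=
            lt_of_lt_of_le (by linarith) (hlb n h x hx)
          exact norm_pos_iff.mp h1
  have hcB : ((c : ℝ) : ℂ) ∈ B := mem_ball_self (by positivity)
  have hBopen : IsOpen B := isOpen_ball
  set L := nhdsWithin ((z m : ℂ) ^ 2) {s : ℂ | ∀ n, s ≠ (z n : ℂ) ^ 2} with hL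
  have hLle : L ≤ nhdsWithin ((c : ℝ) : ℂ) B := by
    rw [hL, hcc, hBopen.nhdsWithin_eq hcB]
    exact nhdsWithin_le_nhds
  have hftend : Filter.Tendsto f L (nhds (f ((c : ℝ) : ℂ))) :=
    (hfcont ((c : ℝ) : ℂ) hcB).mono_left hLle
  have hmden : ((z m : ℂ)) ^ (2 * d') ≠ 0 :=
    pow_ne_zero _ (by exact_mod_cast (hzpos m).ne')
  have hev : ∀ᶠ s in L, (s - (z m : ℂ) ^ 2) * (∑' n, T n s)
      = -(k m : ℂ) * s ^ d' / (z m : ℂ) ^ (2 * d') + (s - (z m : ℂ) ^ 2) * f s := by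
    filter_upwards [hLle self_mem_nhdsWithin, self_mem_nhdsWithin] with s hsB hsS
    have hsm : (z m : ℂ) ^ 2 - s ≠ 0 := sub_ne_zero.2 (Ne.symm (hsS m))
    have hsummable0 : Summable (fun n => if n = m then (0 : ℂ) else T n s) :=
      Summable.of_norm_bounded hu (fun n => hbound n s hsB)
    have hsummable : Summable (fun n => T n s) := by
      have heq : (fun n => T n s)
          = Function.update (fun n => if n = m then (0 : ℂ) else T n s) m (T m s) := by
        funext n; by_cases h : n = m
        · subst h; simp
        · simp [Function.update_of_ne h, if_neg h]
      rw [heq]; exact hsummable0.update m (T m s)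
    rw [Summable.tsum_eq_add_tsum_ite hsummable m, mul_add]
    have hterm : (s - (z m : ℂ) ^ 2) * T m s = -(k m : ℂ) * s ^ d' / (z m : ℂ) ^ (2 * d') := by
      simp only [hT]
      field_simp
      ring
    rw [hterm, hf]
  have ht1 : Filter.Tendsto (fun s : ℂ => -(k m : ℂ) * s ^ d' / (z m : ℂ) ^ (2 * d')) L
      (nhds (-(k m : ℂ))) := by
    have hco : Continuous (fun s : ℂ => -(k m : ℂ) * s ^ d' / (z m : ℂ) ^ (2 * d')) :=
      (continuous_const.mul (continuous_pow d')).div_const _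
    have hval : -(k m : ℂ) * ((z m : ℂ) ^ 2) ^ d' / (z m : ℂ) ^ (2 * d') = -(k m : ℂ) := by
      rw [← pow_mul, mul_div_assoc, div_self hmden, mul_one]
    have h := (hco.tendsto ((z m : ℂ) ^ 2)).mono_left (hL ▸ nhdsWithin_le_nhds)
    rwa [hval] at h
  have ht2 : Filter.Tendsto (fun s : ℂ => (s - (z m : ℂ) ^ 2) * f s) L (nhds 0) := by
    have h1 : Filter.Tendsto (fun s : ℂ => s - (z m : ℂ) ^ 2) L (nhds 0) := by
      have h2 := (continuous_sub_right ((z m : ℂ) ^ 2)).tendsto ((z m : ℂ) ^ 2)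
      rw [sub_self] at h2
      exact h2.mono_left (hL ▸ nhdsWithin_le_nhds)
    simpa using h1.mul hftend
  have hfin := ht1.add ht2
  rw [add_zero] at hfin
  exact hfin.congr' (hev.mono fun s hs => hs.symm)
end

section
/- The function A is polynomially bounded along the negative real axis: A(−x)/x^{d'+1} → 0 as the real variable x → +∞. -/
open Filter Topology


/-- For pairwise distinct positive reals `z n → ∞` and multiplicities `k n ≥ 1` with
`∑ n, k n / z n ^ (2*(d'+1)) < ∞`, the function
`A s = ∑' n, k n * s ^ d' / (z n ^ (2 d') * (z n ^ 2 - s))`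
is polynomially bounded along the negative real axis: `A (-x) / x ^ (d'+1) → 0`
as the real variable `x → +∞`. -/
theorem A_polynomially_bounded (d' : ℕ) (z : ℕ → ℝ) (hzinj : Function.Injective z)
    (hzpos : ∀ n, 0 < z n) (hztop : Filter.Tendsto z Filter.atTop Filter.atTop)
    (k : ℕ → ℕ) (hk : ∀ n, 0 < k n)
    (hsum : Summable fun n => (k n : ℝ) / z n ^ (2 * (d' + 1))) :
    Filter.Tendsto
      (fun x : ℝ =>
        (∑' n, (k n : ℂ) * (-(x : ℂ)) ^ d' / ((z n : ℂ) ^ (2 * d') * ((z n : ℂ) ^ 2 - (-(x : ℂ)))))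
          / (x : ℂ) ^ (d' + 1))
      Filter.atTop (nhds 0) := by
  set f : ℕ → ℝ → ℂ := fun n x =>
    (k n : ℂ) * (-(x : ℂ)) ^ d' / ((z n : ℂ) ^ (2 * d') * ((z n : ℂ) ^ 2 - (-(x : ℂ)))) / (x : ℂ) ^ (d' + 1)
  have hnorm : ∀ n, ∀ x : ℝ, 1 ≤ x →
      ‖f n x‖ ≤ (k n : ℝ) / (z n ^ (2 * (d' + 1)) * x) := by
    intro n x hx
    have hx0 : (0:ℝ) < x := lt_of_lt_of_le one_pos hx
    have hz := hzpos n
    have e1 : (z n:ℂ)^2 - -(x:ℂ) = ((z n^2 + x : ℝ) : ℂ) := by push_cast; ring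
    have e2 : ‖f n x‖ = (k n : ℝ) * x ^ d' / (z n ^ (2*d') * (z n^2 + x) * x ^ (d'+1)) := by
      simp only [f, e1, norm_div, norm_mul, norm_pow, norm_neg, Complex.norm_natCast,
        Complex.norm_real]
      rw [Real.norm_of_nonneg hx0.le, Real.norm_of_nonneg hz.le,
        Real.norm_of_nonneg (by positivity : (0:ℝ) ≤ z n ^ 2 + x), div_div]
    rw [e2]
    have e3 : (k n : ℝ) * x ^ d' / (z n ^ (2*d') * (z n^2 + x) * x ^ (d'+1))
        = (k n : ℝ) / (z n ^ (2*d') * (z n^2 + x) * x) := by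
      rw [pow_succ x d',
        show z n ^ (2*d') * (z n^2+x) * (x^d'*x) = x^d' * (z n ^ (2*d') * (z n^2+x) * x) by ring,
        show (k n:ℝ) * x^d' = x^d' * (k n:ℝ) by ring,
        mul_div_mul_left _ _ (pow_ne_zero d' hx0.ne')]
    rw [e3]
    have e4 : z n ^ (2 * (d'+1)) = z n ^ (2*d') * z n ^ 2 := by
      rw [← pow_add]; ring_nf
    rw [e4]
    refine div_le_div_of_nonneg_left (by positivity) (by positivity) ?_
    nlinarith [mul_pos (pow_pos hz (2*d')) hx0]
  have hbound : ∀ᶠ x : ℝ in atTop, ∀ n, ‖f n x‖ ≤ (k n : ℝ) / z n ^ (2 * (d' + 1)) := by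
    filter_upwards [eventually_ge_atTop (1:ℝ)] with x hx n
    refine (hnorm n x hx).trans ?_
    rw [div_mul_eq_div_div]
    exact div_le_self (div_nonneg (Nat.cast_nonneg _) (pow_nonneg (hzpos n).le _)) hx
  have htend : ∀ n, Tendsto (fun x : ℝ => f n x) atTop (nhds 0) := by
    intro n
    apply squeeze_zero_norm' (a := fun x : ℝ => (k n : ℝ) / z n ^ (2*(d'+1)) * x⁻¹)
    · filter_upwards [eventually_ge_atTop (1:ℝ)] with x hx
      refine (hnorm n x hx).trans (le_of_eq ?_)
      rw [div_mul_eq_div_div, div_eq_mul_inv]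
    · simpa using tendsto_inv_atTop_zero.const_mul ((k n : ℝ) / z n ^ (2*(d'+1)))
  have h0 := tendsto_tsum_of_dominated_convergence (f := fun (x:ℝ) (n:ℕ) => f n x)
    (g := fun _ : ℕ => (0:ℂ)) hsum htend hbound
  simp only [tsum_zero] at h0
  refine h0.congr fun x => ?_
  rw [← tsum_div_const]
end

section
/- Let m ∈ ℕ and define F(s) := s^m · ∏_{n=0}^∞ E_{d'}(s/z_n²)^{k_n}. Then for every complex s with s ≠ 0 and s ≠ z_n² for all n, the logarithmic derivative of F at s equals m/s − A(s); equivalently, −(d/ds) log F(s) = −m/s + ∑_{n=0}^∞ k_n·s^{d'}/(z_n^{2d'}·(z_n² − s)). -/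
open Complex Filter Finset

namespace elemFactor

variable (p : ℕ)

lemma one_sub_mul_sum_Icc_pow_pred (w : ℂ) :
    (1 - w) * ∑ j ∈ Icc 1 p, w ^ (j - 1) = 1 - w ^ p := by
  rw [← Ico_add_one_right_eq_Icc, sum_Ico_eq_sum_range, mul_comm]
  simpa [add_comm 1] using geom_sum_mul_neg w p

theorem hasDerivAt (w : ℂ) :
    HasDerivAt (elemFactor p) (-w ^ p * exp (∑ j ∈ Icc 1 p, w ^ j / (j : ℂ))) w := by
  have hsum : HasDerivAt (fun v : ℂ => ∑ j ∈ Icc 1 p, v ^ j / (j : ℂ))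
      (∑ j ∈ Icc 1 p, w ^ (j - 1)) w := by
    refine HasDerivAt.fun_sum fun j hj => ?_
    have hj : (j : ℂ) ≠ 0 := Nat.cast_ne_zero.2 (by grind)
    exact ((hasDerivAt_pow j w).div_const (j : ℂ)).congr_deriv (mul_div_cancel_left₀ _ hj)
  show HasDerivAt (fun v => (1 - v) * exp (∑ j ∈ Icc 1 p, v ^ j / (j : ℂ))) _ w
  refine (((hasDerivAt_id' w).const_sub 1).mul hsum.cexp).congr_deriv ?_
  linear_combination exp (∑ j ∈ Icc 1 p, w ^ j / (j : ℂ)) * one_sub_mul_sum_Icc_pow_pred p w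

@[fun_prop]
theorem differentiable : Differentiable ℂ (elemFactor p) :=
  fun w => (hasDerivAt p w).differentiableAt

@[fun_prop]
theorem continuous : Continuous (elemFactor p) :=
  (differentiable p).continuous

@[simp]
theorem apply_zero : elemFactor p 0 = 1 := by
  rw [elemFactor, sum_eq_zero fun j hj => by rw [zero_pow (by grind), zero_div]]
  simp

theorem ne_zero {w : ℂ} (hw : w ≠ 1) : elemFactor p w ≠ 0 :=
  mul_ne_zero (sub_ne_zero.2 (Ne.symm hw)) (exp_ne_zero _)

theorem logDeriv_eq {w : ℂ} (hw : w ≠ 1) : logDeriv (elemFactor p) w = -w ^ p / (1 - w) := by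
  rw [logDeriv_apply, (hasDerivAt p w).deriv, elemFactor]
  field_simp [exp_ne_zero]

theorem logDeriv_comp_div_pow (k : ℕ) {a s : ℂ} (ha : a ≠ 0) (hs : s ≠ a) :
    logDeriv (fun x => elemFactor p (x / a) ^ k) s = -(k * s ^ p / (a ^ p * (a - s))) := by
  have hdiv : DifferentiableAt ℂ (· / a) s := differentiableAt_id.div_const a
  have hE : DifferentiableAt ℂ (fun x => elemFactor p (x / a)) s :=
    (differentiable p _).comp s hdiv
  rw [logDeriv_fun_pow hE,
    show (fun x => elemFactor p (x / a)) = elemFactor p ∘ (· / a) from rfl,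
    logDeriv_comp (differentiable p _) hdiv,
    logDeriv_eq p fun h => hs ((div_eq_one_iff_eq ha).1 h), deriv_div_const, deriv_id'', div_pow]
  field_simp

theorem norm_exp_sum_le {w : ℂ} (hw : ‖w‖ ≤ 1) :
    ‖exp (∑ j ∈ Icc 1 p, w ^ j / (j : ℂ))‖ ≤ Real.exp p := by
  refine (norm_exp_le_exp_norm _).trans (Real.exp_le_exp.2 ?_)
  calc ‖∑ j ∈ Icc 1 p, w ^ j / (j : ℂ)‖ ≤ ∑ j ∈ Icc 1 p, ‖w ^ j / (j : ℂ)‖ := norm_sum_le _ _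
    _ ≤ ∑ j ∈ Icc 1 p, (1 : ℝ) := by
      refine sum_le_sum fun j hj => ?_
      have hj : (1 : ℝ) ≤ j := by exact_mod_cast (mem_Icc.1 hj).1
      rw [norm_div, norm_pow, Complex.norm_natCast]
      exact div_le_one_of_le₀ ((pow_le_one₀ (norm_nonneg w) hw).trans hj) (by positivity)
    _ = p := by simp

theorem norm_sub_one_le {w : ℂ} (hw : ‖w‖ ≤ 1) :
    ‖elemFactor p w - 1‖ ≤ Real.exp p * ‖w‖ ^ (p + 1) := by
  have hderiv : ∀ v ∈ Metric.closedBall (0 : ℂ) ‖w‖,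
      ‖-v ^ p * exp (∑ j ∈ Icc 1 p, v ^ j / (j : ℂ))‖ ≤ Real.exp p * ‖w‖ ^ p := by
    intro v hv
    rw [mem_closedBall_zero_iff] at hv
    rw [norm_mul, norm_neg, norm_pow, mul_comm]
    exact mul_le_mul (norm_exp_sum_le p (hv.trans hw)) (pow_le_pow_left₀ (norm_nonneg v) hv p)
      (by positivity) (by positivity)
  have := (convex_closedBall (0 : ℂ) ‖w‖).norm_image_sub_le_of_norm_hasDerivWithin_le
    (fun v _ => (hasDerivAt p v).hasDerivWithinAt) hderiv
    (Metric.mem_closedBall_self (norm_nonneg w)) (y := w) (by simp)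
  simpa [pow_succ, mul_assoc] using this

end elemFactor

theorem norm_pow_sub_one_le {R : Type*} [NormedCommRing R] [NormOneClass R] {x : R} {k : ℕ}
    (h : k * ‖x - 1‖ ≤ 1) : ‖x ^ k - 1‖ ≤ 2 * (k * ‖x - 1‖) := by
  have hprod := (range k).norm_prod_one_add_sub_one_le fun _ => x - 1
  simp only [add_sub_cancel, prod_const, card_range, sum_const, nsmul_eq_mul] at hprod
  have hnn : 0 ≤ k * ‖x - 1‖ := by positivity
  have hexp := Real.abs_exp_sub_one_le (x := k * ‖x - 1‖) (by rwa [abs_of_nonneg hnn])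
  rw [abs_of_nonneg hnn, abs_of_nonneg (by linarith [Real.add_one_le_exp (k * ‖x - 1‖)])] at hexp
  exact hprod.trans hexp

theorem hasSum_logDeriv_of_hasProdLocallyUniformlyOn {ι : Type*} {f : ι → ℂ → ℂ} {g : ℂ → ℂ}
    {U : Set ℂ} (hU : IsOpen U) (hf : HasProdLocallyUniformlyOn f g U)
    (hd : ∀ i, DifferentiableOn ℂ (f i) U) {x : ℂ} (hx : x ∈ U) (hfx : ∀ i, f i x ≠ 0)
    (hgx : g x ≠ 0) : HasSum (fun i => logDeriv (f i) x) (logDeriv g x) := by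
  refine (logDeriv_tendsto hU hx hf (.of_forall fun t => ?_) hgx).congr fun t => ?_
  · simpa only [← prod_fn] using DifferentiableOn.finsetProd fun i _ => hd i
  · exact logDeriv_prod (fun i _ => hfx i) fun i _ =>
      (hd i x hx).differentiableAt (hU.mem_nhds hx)

noncomputable def canonicalProduct (p : ℕ) (a : ℕ → ℂ) (k : ℕ → ℕ) (s : ℂ) : ℂ :=
  ∏' n, elemFactor p (s / a n) ^ k n

namespace canonicalProduct

variable {p : ℕ} {a : ℕ → ℂ} {k : ℕ → ℕ}

theorem factor_ne_zero {s : ℂ} (hs : ∀ n, s ≠ a n) (n : ℕ) :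
    elemFactor p (s / a n) ^ k n ≠ 0 :=
  pow_ne_zero _ (elemFactor.ne_zero p fun h => hs n (eq_of_div_eq_one h))

theorem eventually_norm_factor_sub_one_le (ha : Tendsto (‖a ·‖) atTop atTop)
    (hsum : Summable fun n => (k n : ℝ) / ‖a n‖ ^ (p + 1)) (R : ℝ) :
    ∀ᶠ n in atTop, ∀ x ∈ Metric.ball (0 : ℂ) R, ‖elemFactor p (x / a n) ^ k n - 1‖ ≤
      2 * (Real.exp p * R ^ (p + 1) * (k n / ‖a n‖ ^ (p + 1))) := by
  have hu := (hsum.mul_left (Real.exp p * R ^ (p + 1))).tendsto_atTop_zero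
  filter_upwards [ha.eventually_ge_atTop R, hu.eventually_le_const one_pos] with n hRn hun x hx
  rw [mem_ball_zero_iff] at hx
  have hR : 0 < R := (norm_nonneg x).trans_lt hx
  have hw : ‖x / a n‖ ≤ R / ‖a n‖ := by
    rw [norm_div]
    exact div_le_div_of_nonneg_right hx.le (hR.le.trans hRn)
  have hw1 : ‖x / a n‖ ≤ 1 := hw.trans (div_le_one_of_le₀ hRn (hR.le.trans hRn))
  have hbound : k n * ‖elemFactor p (x / a n) - 1‖ ≤
      Real.exp p * R ^ (p + 1) * (k n / ‖a n‖ ^ (p + 1)) :=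
    calc k n * ‖elemFactor p (x / a n) - 1‖
      _ ≤ k n * (Real.exp p * (R / ‖a n‖) ^ (p + 1)) := by
          gcongr
          exact (elemFactor.norm_sub_one_le p hw1).trans (by gcongr)
      _ = Real.exp p * R ^ (p + 1) * (k n / ‖a n‖ ^ (p + 1)) := by ring
  exact (norm_pow_sub_one_le (hbound.trans hun)).trans (by gcongr)

theorem hasProdLocallyUniformlyOn (ha : Tendsto (‖a ·‖) atTop atTop)
    (hsum : Summable fun n => (k n : ℝ) / ‖a n‖ ^ (p + 1)) (R : ℝ) :
    HasProdLocallyUniformlyOn (fun n x => elemFactor p (x / a n) ^ k n) (canonicalProduct p a k)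
      (Metric.ball 0 R) := by
  have := Summable.hasProdLocallyUniformlyOn_nat_one_add Metric.isOpen_ball
    ((hsum.mul_left _).mul_left 2) (eventually_norm_factor_sub_one_le ha hsum R)
    fun n => by fun_prop
  simp only [add_sub_cancel] at this
  exact this

theorem differentiable (ha : Tendsto (‖a ·‖) atTop atTop)
    (hsum : Summable fun n => (k n : ℝ) / ‖a n‖ ^ (p + 1)) :
    Differentiable ℂ (canonicalProduct p a k) := fun x =>
  ((hasProdLocallyUniformlyOn ha hsum (‖x‖ + 1)).differentiableOn
    (.of_forall fun t => by fun_prop) Metric.isOpen_ball).differentiableAt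
    (Metric.isOpen_ball.mem_nhds (by simp))

theorem ne_zero (ha : Tendsto (‖a ·‖) atTop atTop)
    (hsum : Summable fun n => (k n : ℝ) / ‖a n‖ ^ (p + 1)) {s : ℂ} (hs : ∀ n, s ≠ a n) :
    canonicalProduct p a k s ≠ 0 := by
  have hsummable : Summable fun n => ‖elemFactor p (s / a n) ^ k n - 1‖ :=
    .of_norm_bounded_eventually_nat ((hsum.mul_left _).mul_left 2) <| by
      filter_upwards [eventually_norm_factor_sub_one_le ha hsum (‖s‖ + 1)] with n hn
      simpa using hn s (by simp)
  have := tprod_one_add_ne_zero_of_summable (f := fun n => elemFactor p (s / a n) ^ k n - 1)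
    (fun n => by rw [add_sub_cancel]; exact factor_ne_zero hs n) hsummable
  simp only [add_sub_cancel] at this
  exact this

theorem hasSum_logDeriv (ha : Tendsto (‖a ·‖) atTop atTop)
    (hsum : Summable fun n => (k n : ℝ) / ‖a n‖ ^ (p + 1)) (ha0 : ∀ n, a n ≠ 0) {s : ℂ}
    (hs : ∀ n, s ≠ a n) :
    HasSum (fun n => -(k n * s ^ p / (a n ^ p * (a n - s))))
      (logDeriv (canonicalProduct p a k) s) := by
  have := hasSum_logDeriv_of_hasProdLocallyUniformlyOn Metric.isOpen_ball
    (hasProdLocallyUniformlyOn ha hsum (‖s‖ + 1)) (fun n => by fun_prop) (by simp)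
    (factor_ne_zero hs) (ne_zero ha hsum hs)
  simpa only [elemFactor.logDeriv_comp_div_pow p _ (ha0 _) (hs _)] using this

end canonicalProduct

theorem logDeriv_hadamard_general (d' : ℕ) (z : ℕ → ℝ)
    (hzpos : ∀ n, 0 < z n) (hztop : Filter.Tendsto z Filter.atTop Filter.atTop)
    (k : ℕ → ℕ)
    (hsum : Summable fun n => (k n : ℝ) / z n ^ (2 * (d' + 1))) (m : ℕ) :
    ∀ s : ℂ, s ≠ 0 → (∀ n, s ≠ (z n : ℂ) ^ 2) →
      logDeriv (fun s : ℂ => s ^ m * ∏' n, elemFactor d' (s / (z n : ℂ) ^ 2) ^ k n) s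
        = (m : ℂ) / s
          - ∑' n, (k n : ℂ) * s ^ d' / ((z n : ℂ) ^ (2 * d') * ((z n : ℂ) ^ 2 - s)) := by
  intro s hs0 hsz
  set a : ℕ → ℂ := fun n => (z n : ℂ) ^ 2
  have ha0 : ∀ n, a n ≠ 0 := fun n => pow_ne_zero 2 (ofReal_ne_zero.2 (hzpos n).ne')
  have hnorm : ∀ n, ‖a n‖ = z n ^ 2 := fun n => by simp [a]
  have ha : Tendsto (‖a ·‖) atTop atTop := by
    simpa only [hnorm, Function.comp_def] using (tendsto_pow_atTop two_ne_zero).comp hztop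
  have hsum' : Summable fun n => (k n : ℝ) / ‖a n‖ ^ (d' + 1) := by
    simpa only [hnorm, ← pow_mul] using hsum
  change logDeriv (fun s => s ^ m * canonicalProduct d' a k s) s = _
  rw [logDeriv_mul (f := (· ^ m)) s (pow_ne_zero m hs0)
    (canonicalProduct.ne_zero ha hsum' hsz) (differentiableAt_pow m)
    (canonicalProduct.differentiable ha hsum' s), logDeriv_pow,
    (canonicalProduct.hasSum_logDeriv ha hsum' ha0 hsz).tsum_eq.symm, tsum_neg, sub_eq_add_neg]
  simp only [a, pow_mul]

/-- For `F s = s ^ m * ∏' n, E d' (s / z n ^ 2) ^ k n` and every `s` with `s ≠ 0` and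
`s ≠ z n ^ 2` for all `n`, the logarithmic derivative of `F` at `s` equals `m/s - A s`,
i.e. `-(d/ds) log F s = -m/s + ∑' n, k n * s ^ d' / (z n ^ (2 d') * (z n ^ 2 - s))`. -/
theorem logDeriv_hadamard (d' : ℕ) (z : ℕ → ℝ) (hzinj : Function.Injective z)
    (hzpos : ∀ n, 0 < z n) (hztop : Filter.Tendsto z Filter.atTop Filter.atTop)
    (k : ℕ → ℕ) (hk : ∀ n, 0 < k n)
    (hsum : Summable fun n => (k n : ℝ) / z n ^ (2 * (d' + 1))) (m : ℕ) :
    ∀ s : ℂ, s ≠ 0 → (∀ n, s ≠ (z n : ℂ) ^ 2) →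
      logDeriv (fun s : ℂ => s ^ m * ∏' n, elemFactor d' (s / (z n : ℂ) ^ 2) ^ k n) s
        = (m : ℂ) / s
          - ∑' n, (k n : ℂ) * s ^ d' / ((z n : ℂ) ^ (2 * d') * ((z n : ℂ) ^ 2 - s)) :=
  logDeriv_hadamard_general d' z hzpos hztop k hsum m
end

section
/- The only real zeros of the Riemann zeta function are the trivial zeros: for a real number x, riemannZeta(x) = 0 if and only if x = −2·(n+1) for some natural number n. -/
/-!
For `x ≥ 1` this is the non-vanishing of `ζ` on `re s ≥ 1`, and `ζ 0 = -1/2`. For `x < 0` the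
functional equation writes `ζ x` as `2 (2π)^(x-1) Γ(1-x) cos(π(1-x)/2) ζ(1-x)`, in which only the
cosine can vanish, and it does so exactly at the negative even integers. For `0 < x < 1` we use
the Dirichlet eta function: `η(s) = (1 - 2^(1-s)) ζ(s)` holds for `re s > 1` by rearranging the series and extends to
`re s > 0` by analytic continuation, while at real `x > 0` the series for `η x` is a sum of positive
terms `(2k+1)^(-x) - (2k+2)^(-x)`.
-/

open Complex

/-- The alternating series `∑ (-1)^(n+1) n^(-s)` with consecutive terms paired, which makes it
converge absolutely on `re s > 0`. -/
noncomputable def dirichletEta (s : ℂ) : ℂ :=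
  ∑' k : ℕ, ((2 * k + 1 : ℂ) ^ (-s) - (2 * k + 2 : ℂ) ^ (-s))

lemma norm_ofReal_cpow_neg_sub_le {a b : ℝ} (ha : 0 < a) (hab : a ≤ b) {s : ℂ}
    (hs : -1 ≤ s.re) :
    ‖(a : ℂ) ^ (-s) - (b : ℂ) ^ (-s)‖ ≤ ‖s‖ * a ^ (-(s.re + 1)) * (b - a) := by
  have hderiv : ∀ t ∈ Set.Icc a b,
      HasDerivWithinAt (fun t : ℝ ↦ (t : ℂ) ^ (-s)) (-s * (t : ℂ) ^ (-s - 1)) (Set.Icc a b) t :=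
    fun t ht ↦ ((hasStrictDerivAt_cpow_const (ofReal_mem_slitPlane.2 (ha.trans_le ht.1))
      ).hasDerivAt.comp_ofReal).hasDerivWithinAt
  have hbound : ∀ t ∈ Set.Icc a b, ‖-s * (t : ℂ) ^ (-s - 1)‖ ≤ ‖s‖ * a ^ (-(s.re + 1)) := by
    intro t ht
    have hre : (-s - 1).re = -(s.re + 1) := by simp only [sub_re, neg_re, one_re]; ring
    rw [norm_mul, norm_neg, norm_cpow_eq_rpow_re_of_pos (ha.trans_le ht.1), hre]
    exact mul_le_mul_of_nonneg_left (Real.rpow_le_rpow_of_nonpos ha ht.1 (by linarith))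
      (norm_nonneg s)
  have := (convex_Icc a b).norm_image_sub_le_of_norm_hasDerivWithin_le hderiv hbound
    (Set.left_mem_Icc.2 hab) (Set.right_mem_Icc.2 hab)
  rwa [← norm_neg, neg_sub, Real.norm_of_nonneg (sub_nonneg.2 hab)] at this

lemma summable_two_mul_add_one_rpow_neg {p : ℝ} (hp : 1 < p) :
    Summable fun k : ℕ ↦ (2 * k + 1 : ℝ) ^ (-p) := by
  have hshift : Summable fun k : ℕ ↦ ((k + 1 : ℕ) : ℝ) ^ (-p) :=
    (summable_nat_add_iff 1).2 (Real.summable_nat_rpow.2 (by linarith))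
  refine hshift.of_nonneg_of_le (fun k ↦ by positivity) fun k ↦ ?_
  push_cast
  exact Real.rpow_le_rpow_of_nonpos (by positivity) (by linarith [k.cast_nonneg (α := ℝ)])
    (by linarith)

lemma norm_dirichletEta_term_le {σ : ℝ} (hσ : -1 ≤ σ) (k : ℕ) {s : ℂ} (hs : σ ≤ s.re) :
    ‖(2 * k + 1 : ℂ) ^ (-s) - (2 * k + 2 : ℂ) ^ (-s)‖ ≤ ‖s‖ * (2 * k + 1 : ℝ) ^ (-(σ + 1)) := by
  have hk : (0 : ℝ) ≤ k := k.cast_nonneg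
  calc ‖(2 * k + 1 : ℂ) ^ (-s) - (2 * k + 2 : ℂ) ^ (-s)‖
      = ‖((2 * k + 1 : ℝ) : ℂ) ^ (-s) - ((2 * k + 2 : ℝ) : ℂ) ^ (-s)‖ := by push_cast; rfl
    _ ≤ ‖s‖ * (2 * k + 1 : ℝ) ^ (-(s.re + 1)) * ((2 * k + 2) - (2 * k + 1)) :=
      norm_ofReal_cpow_neg_sub_le (by positivity) (by linarith) (by linarith)
    _ ≤ ‖s‖ * (2 * k + 1 : ℝ) ^ (-(σ + 1)) := by
      rw [show (2 * k + 2 : ℝ) - (2 * k + 1) = 1 by ring, mul_one]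
      gcongr
      linarith

lemma summable_dirichletEta_term {s : ℂ} (hs : 0 < s.re) :
    Summable fun k : ℕ ↦ (2 * k + 1 : ℂ) ^ (-s) - (2 * k + 2 : ℂ) ^ (-s) :=
  .of_norm_bounded ((summable_two_mul_add_one_rpow_neg (by linarith : 1 < s.re + 1)).mul_left ‖s‖)
    (norm_dirichletEta_term_le (by linarith) · le_rfl)

lemma differentiableOn_dirichletEta : DifferentiableOn ℂ dirichletEta {s | 0 < s.re} := by
  intro s₀ (hs₀ : 0 < s₀.re)
  set U : Set ℂ := {s | s₀.re / 2 < s.re ∧ ‖s‖ < ‖s₀‖ + 1}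
  have hU : IsOpen U := (isOpen_lt continuous_const continuous_re).inter
    (isOpen_lt continuous_norm continuous_const)
  have hs₀U : s₀ ∈ U := ⟨by linarith, by linarith⟩
  have hdiff : DifferentiableOn ℂ dirichletEta U := by
    refine differentiableOn_tsum_of_summable_norm
      ((summable_two_mul_add_one_rpow_neg (by linarith : 1 < s₀.re / 2 + 1)).mul_left
        (‖s₀‖ + 1)) (fun k s _ ↦ ?_) hU fun k s hs ↦ ?_
    · have hpow : ∀ c : ℂ, c ≠ 0 → DifferentiableAt ℂ (fun s : ℂ ↦ c ^ (-s)) s :=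
        fun c hc ↦ differentiableAt_neg_iff.2 differentiableAt_id |>.const_cpow (Or.inl hc)
      exact (DifferentiableAt.sub (hpow _ (by norm_cast))
        (hpow _ (by norm_cast))).differentiableWithinAt
    · calc _ ≤ ‖s‖ * (2 * k + 1 : ℝ) ^ (-(s₀.re / 2 + 1)) :=
            norm_dirichletEta_term_le (by linarith) k hs.1.le
        _ ≤ (‖s₀‖ + 1) * (2 * k + 1 : ℝ) ^ (-(s₀.re / 2 + 1)) := by gcongr; exact hs.2.le
  exact (hdiff.differentiableAt (hU.mem_nhds hs₀U)).differentiableWithinAt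

lemma dirichletEta_eq_of_one_lt_re {s : ℂ} (hs : 1 < s.re) :
    dirichletEta s = (1 - 2 ^ (1 - s)) * riemannZeta s := by
  set g : ℕ → ℂ := fun n ↦ ((n : ℂ) + 1) ^ (-s)
  have hg : HasSum g (riemannZeta s) := by
    rw [zeta_eq_tsum_one_div_nat_add_one_cpow hs]
    simp only [g, cpow_neg, ← one_div]
    refine Summable.hasSum ?_
    simpa using (summable_nat_add_iff 1).2 (Complex.summable_one_div_nat_cpow.2 hs)
  have hodd : HasSum (fun k ↦ g (2 * k + 1)) (2 ^ (-s) * riemannZeta s) := by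
    refine (hg.mul_left _).congr_fun fun k ↦ ?_
    simp only [g]
    push_cast
    rw [show (2 * k + 1 + 1 : ℂ) = (2 : ℕ) * ((k + 1 : ℕ) : ℂ) by push_cast; ring,
      natCast_mul_natCast_cpow]
    push_cast; rfl
  have heven : HasSum (fun k ↦ g (2 * k)) ((1 - 2 ^ (-s)) * riemannZeta s) := by
    have he : HasSum (fun k ↦ g (2 * k)) (∑' k, g (2 * k)) :=
      (hg.summable.comp_injective (mul_right_injective₀ two_ne_zero)).hasSum
    rwa [show (1 - 2 ^ (-s)) * riemannZeta s = ∑' k, g (2 * k) by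
      linear_combination -(he.even_add_odd hodd).unique hg]
  have : dirichletEta s = ∑' k, (g (2 * k) - g (2 * k + 1)) := by
    unfold dirichletEta g; push_cast; ring_nf
  have htwo : (2 : ℂ) ^ (1 - s) = 2 * 2 ^ (-s) := by
    rw [sub_eq_add_neg, cpow_add _ _ two_ne_zero, cpow_one]
  rw [this, (heven.sub hodd).tsum_eq, htwo]
  ring

lemma dirichletEta_eq {s : ℂ} (hs : 0 < s.re) (hs₁ : s ≠ 1) :
    dirichletEta s = (1 - 2 ^ (1 - s)) * riemannZeta s := by
  have hopen : IsOpen {s : ℂ | 0 < s.re} := isOpen_lt continuous_const continuous_re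
  have hpow : Differentiable ℂ fun s : ℂ ↦ 1 - (2 : ℂ) ^ (1 - s) := by fun_prop
  -- Multiplying by `s - 1` removes the pole of `ζ`, so that both sides are analytic on the whole
  -- half-plane `re s > 0`.
  have key : Set.EqOn (fun s ↦ (s - 1) * dirichletEta s)
      (fun s ↦ (1 - 2 ^ (1 - s)) * riemannZeta₁ s) {s | 0 < s.re} := by
    refine AnalyticOnNhd.eqOn_of_preconnected_of_eventuallyEq
      ((differentiableOn_id.sub_const 1 |>.mul differentiableOn_dirichletEta).analyticOnNhd hopen)
      ((hpow.mul differentiable_riemannZeta₁).differentiableOn.analyticOnNhd hopen)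
      (convex_halfSpace_re_gt 0).isPreconnected (z₀ := 2) (by simp) ?_
    filter_upwards [(isOpen_lt continuous_const continuous_re).mem_nhds
      (by simp : (1 : ℝ) < (2 : ℂ).re)] with z (hz : 1 < z.re)
    have hz₁ : z - 1 ≠ 0 := sub_ne_zero.2 fun h ↦ by simp [h] at hz
    rw [dirichletEta_eq_of_one_lt_re hz, riemannZeta_eq_inv_sub_mul (sub_ne_zero.1 hz₁)]
    field_simp
  have h := key hs
  simp only at h
  rw [riemannZeta_eq_inv_sub_mul hs₁]
  field_simp [sub_ne_zero.2 hs₁]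
  linear_combination h

lemma dirichletEta_term_ofReal (x : ℝ) (k : ℕ) :
    (2 * k + 1 : ℂ) ^ (-(x : ℂ)) - (2 * k + 2 : ℂ) ^ (-(x : ℂ))
      = ((2 * k + 1 : ℝ) ^ (-x) - (2 * k + 2 : ℝ) ^ (-x) : ℝ) := by
  rw [ofReal_sub, ofReal_cpow (by positivity), ofReal_cpow (by positivity)]
  push_cast; rfl

lemma dirichletEta_ofReal_re_pos {x : ℝ} (hx : 0 < x) : 0 < (dirichletEta x).re := by
  have hsum := summable_dirichletEta_term (s := x) (by simpa using hx)
  have hterm (k : ℕ) : 0 < (2 * k + 1 : ℝ) ^ (-x) - (2 * k + 2 : ℝ) ^ (-x) :=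
    sub_pos.2 (Real.rpow_lt_rpow_of_neg (by positivity) (by linarith) (by linarith))
  simp only [dirichletEta, dirichletEta_term_ofReal] at hsum ⊢
  rw [← ofReal_tsum, ofReal_re]
  exact (summable_ofReal.1 hsum).tsum_pos (fun k ↦ (hterm k).le) 0 (hterm 0)

lemma riemannZeta_ofReal_ne_zero_of_pos {x : ℝ} (hx : 0 < x) : riemannZeta x ≠ 0 := by
  rcases lt_or_ge x 1 with hx₁ | hx₁
  · intro hζ
    have hη := dirichletEta_eq (s := x) (by simpa using hx) (by exact_mod_cast hx₁.ne)
    rw [hζ, mul_zero] at hη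
    simpa [hη] using dirichletEta_ofReal_re_pos hx
  · exact riemannZeta_ne_zero_of_one_le_re (by simpa using hx₁)

lemma riemannZeta_ne_zero_of_re_neg {s : ℂ} (hs : s.re < 0)
    (hs' : ∀ n : ℕ, s ≠ -2 * (n + 1)) : riemannZeta s ≠ 0 := by
  have hnat : ∀ n : ℕ, 1 - s ≠ -n := fun n h ↦ by
    have := congrArg re h
    simp only [sub_re, one_re, neg_re, natCast_re] at this
    linarith [n.cast_nonneg (α := ℝ)]
  have hone : 1 - s ≠ 1 := fun h ↦ by simp [sub_eq_self.1 h] at hs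
  have hcos : cos (Real.pi * (1 - s) / 2) ≠ 0 := by
    rw [Ne, cos_eq_zero_iff]
    rintro ⟨k, hk⟩
    have hsk : s = -2 * k := by
      have hπ : (Real.pi : ℂ) * (1 - s) = Real.pi * (2 * k + 1) := by linear_combination 2 * hk
      linear_combination -mul_left_cancel₀ (ofReal_ne_zero.2 Real.pi_ne_zero) hπ
    obtain ⟨n, rfl⟩ := Int.eq_succ_of_zero_lt (show 0 < k by
      have := congrArg re hsk
      simp only [mul_re, neg_re, re_ofNat, intCast_re, intCast_im] at this
      exact_mod_cast (by linarith : (0 : ℝ) < k))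
    exact hs' n (by rw [hsk]; push_cast; ring)
  have := riemannZeta_one_sub hnat hone
  rw [sub_sub_cancel] at this
  rw [this]
  refine mul_ne_zero (mul_ne_zero (mul_ne_zero (mul_ne_zero two_ne_zero ?_)
    (Gamma_ne_zero hnat)) hcos) (riemannZeta_ne_zero_of_one_le_re (by rw [sub_re, one_re]; linarith))
  exact cpow_ne_zero_iff.2 (Or.inl (by simp [Real.pi_ne_zero]))

/-- The only real zeros of the Riemann zeta function are the trivial zeros: for a real
number `x`, `ζ x = 0` iff `x = -2 (n+1)` for some natural number `n`. -/
theorem riemannZeta_real_zero_iff (x : ℝ) :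
    riemannZeta (x : ℂ) = 0 ↔ ∃ n : ℕ, x = -2 * ((n : ℝ) + 1) := by
  refine ⟨fun hζ ↦ ?_, ?_⟩
  · by_contra! hx
    rcases lt_trichotomy x 0 with hneg | rfl | hpos
    · refine riemannZeta_ne_zero_of_re_neg (by simpa using hneg) (fun n h ↦ hx n ?_) hζ
      exact_mod_cast h
    · simp [riemannZeta_zero] at hζ
    · exact riemannZeta_ofReal_ne_zero_of_pos hpos hζ
  · rintro ⟨n, rfl⟩
    simpa using riemannZeta_neg_two_mul_nat_add_one n
end
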